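/- arXiv:1703.09587 — 3 statements merged into one kernel-verified Lean document; each statement's English description precedes it below -/
import Mathlib

section
/- (Bass identity for complete magnetic graphs) Let N ≥ 3, let M be any matrix of the uni-modular ensemble with phases Φ, and let Y(Φ) be the associated magnetic Hashimoto matrix of dimension N(N−1). Then for every η ∈ ℂ: det(η I_{N(N−1)} − Y(Φ)) = (η² − 1)^{N(N−3)/2} · det((η² + N − 2) I_N − η M). -/
open MeasureTheory Matrix

noncomputable section

/-- The uniform probability measure on `[0, 2π)`. -/
def uniformPhase : Measure ℝ :=
  (ENNReal.ofReal (2 * Real.pi))⁻¹ • volume.restrict (Set.Ico 0 (2 * Real.pi))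

/-- Product measure: the phases `ω μ ν` (used for `μ < ν`) are i.i.d. uniform on `[0, 2π)`. -/
def phaseMeasure (N : ℕ) : Measure (Fin N → Fin N → ℝ) :=
  Measure.pi fun _ => Measure.pi fun _ => uniformPhase

/-- Antisymmetrized phases built from a raw sample: `φ ν μ = - φ μ ν`, `φ μ μ = 0`. -/
def phases (N : ℕ) (ω : Fin N → Fin N → ℝ) : Fin N → Fin N → ℝ :=
  fun μ ν => if μ < ν then ω μ ν else if ν < μ then - (ω ν μ) else 0

/-- The uni-modular matrix with phases `φ`: zero diagonal, `M μ ν = exp(i φ μ ν)` off diagonal. -/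
def umeMatrix (N : ℕ) (φ : Fin N → Fin N → ℝ) : Matrix (Fin N) (Fin N) ℂ :=
  fun μ ν => if μ = ν then 0 else Complex.exp (Complex.I * (φ μ ν : ℂ))


/-- A directed edge of the complete graph on `N` vertices: a pair `e = (j, i)` with `i ≠ j`;
its origin is `e.2` and its terminus is `e.1`. -/
abbrev DirEdge (N : ℕ) : Type := {e : Fin N × Fin N // e.1 ≠ e.2}

/-- The magnetic Hashimoto matrix of the complete graph on `N` vertices with phases `φ`:
`Y(Φ)_{e',e} = (δ_{o(e'),τ(e)} − δ_{e',ê}) · exp((i/2)(φ_e + φ_{e'}))`. -/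
def hashimoto (N : ℕ) (φ : Fin N → Fin N → ℝ) :
    Matrix (DirEdge N) (DirEdge N) ℂ :=
  fun e' e =>
    (((if e'.1.2 = e.1.1 then 1 else 0) : ℂ) - ((if e'.1 = (e.1.2, e.1.1) then 1 else 0) : ℂ)) *
      Complex.exp (Complex.I / 2 * ((φ e.1.1 e.1.2 : ℂ) + (φ e'.1.1 e'.1.2 : ℂ)))


/-!
Write `Y = Pᵀ Q - J`, where `P` and `Q` are the origin and terminus incidence matrices weighted by
`exp (i φ_e / 2)` and `J` is the edge reversal. Since `J² = 1`,
`(η - Y)(η - J) = (η² - 1) - Pᵀ (Q (η - J))`, and the Weinstein–Aronszajn identity moves this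
rank-`N` perturbation to the vertex space, where `Q Pᵀ = M` and, by antisymmetry of the phases,
`Q J Pᵀ = (N - 1)`. Being a product of `N(N-1)/2` disjoint transpositions, `J` has
`det (η - J) = (η² - 1)^(N(N-1)/2)`. Cancelling powers of `η² - 1` gives the identity for
`η² ≠ 1`, and continuity in `η` gives it everywhere.
-/

namespace Matrix

variable {R m n : Type*} [CommRing R] [Fintype m] [DecidableEq m] [Fintype n] [DecidableEq n]

theorem pow_card_mul_det_smul_one_sub_mul_comm (A : Matrix m n R) (B : Matrix n m R) (t : R) :
    t ^ Fintype.card n * det (t • 1 - A * B) = t ^ Fintype.card m * det (t • 1 - B * A) := by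
  simpa [eval_charpoly, smul_one_eq_diagonal] using
    congrArg (Polynomial.eval t) (charpoly_mul_comm' A B)

theorem det_smul_one_sub_mul_sub_involutive (J : Matrix m m R) (hJ : J * J = 1)
    (A : Matrix m n R) (B : Matrix n m R) (η : R) :
    det (η • 1 - (A * B - J)) * det (η • 1 - J) * (η ^ 2 - 1) ^ Fintype.card n
      = (η ^ 2 - 1) ^ Fintype.card m * det ((η ^ 2 - 1) • 1 - η • (B * A) + B * J * A) := by
  have hfactor : (η • 1 - (A * B - J)) * (η • 1 - J)
      = (η ^ 2 - 1) • 1 - A * (B * (η • 1 - J)) := by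
    simp only [Matrix.sub_mul, Matrix.mul_sub, Matrix.smul_mul, Matrix.mul_smul, Matrix.mul_one,
      Matrix.one_mul, hJ, Matrix.mul_assoc]
    module
  have hswap : B * (η • 1 - J) * A = η • (B * A) - B * J * A := by
    simp only [Matrix.mul_sub, Matrix.sub_mul, Matrix.mul_smul, Matrix.smul_mul, Matrix.mul_one]
  rw [← det_mul, hfactor, mul_comm, pow_card_mul_det_smul_one_sub_mul_comm, hswap,
    sub_sub_eq_add_sub, add_sub_right_comm]

end Matrix

namespace DirEdge

variable {N : ℕ}

def reverse (e : DirEdge N) : DirEdge N := ⟨e.1.swap, e.2.symm⟩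

@[simp] theorem reverse_reverse (e : DirEdge N) : e.reverse.reverse = e :=
  Subtype.ext e.1.swap_swap

theorem eq_reverse_iff {e' e : DirEdge N} : e' = e.reverse ↔ e'.1 = (e.1.2, e.1.1) :=
  Subtype.ext_iff

theorem card_eq : Fintype.card (DirEdge N) = N * (N - 1) := by
  have hoff : Finset.univ.filter (fun p : Fin N × Fin N => p.1 ≠ p.2) = Finset.univ.offDiag := by
    ext p
    simp
  rw [Fintype.card_subtype, hoff, Finset.offDiag_card, Finset.card_univ, Fintype.card_fin,
    Nat.mul_sub_one]

theorem card_origin_eq (u : Fin N) : Fintype.card {e : DirEdge N // e.1.2 = u} = N - 1 := by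
  let toNe : {e : DirEdge N // e.1.2 = u} ≃ {j : Fin N | j ≠ u} :=
    { toFun := fun e => ⟨e.1.1.1, fun h => e.1.2 (h.trans e.2.symm)⟩
      invFun := fun j => ⟨⟨(j, u), j.2⟩, rfl⟩
      left_inv := fun ⟨⟨(_, _), _⟩, hv⟩ => by subst hv; rfl
      right_inv := fun _ => rfl }
  rw [Fintype.card_congr toNe, Set.card_ne_eq, Fintype.card_fin]

def orientEquiv : Fin 2 × {p : Fin N × Fin N // p.1 < p.2} ≃ DirEdge N where
  toFun ip := if ip.1 = 0 then ⟨ip.2.1, ip.2.2.ne⟩ else reverse ⟨ip.2.1, ip.2.2.ne⟩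
  invFun e := if h : e.1.1 < e.1.2 then (0, ⟨e.1, h⟩)
    else (1, ⟨e.1.swap, (not_lt.1 h).lt_of_ne e.2.symm⟩)
  left_inv := by
    rintro ⟨i, p⟩
    fin_cases i
    · simp [p.2]
    · simp [reverse, lt_asymm p.2]
  right_inv e := by
    by_cases h : e.1.1 < e.1.2 <;> simp [h, reverse]

end DirEdge

section Reversal

variable (N : ℕ) (R : Type*)

def reversalMatrix [Zero R] [One R] : Matrix (DirEdge N) (DirEdge N) R :=
  fun e' e => if e' = e.reverse then 1 else 0

variable {N R}

theorem reversalMatrix_mul_self [NonAssocSemiring R] :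
    reversalMatrix N R * reversalMatrix N R = 1 := by
  ext e' e
  simp [reversalMatrix, mul_apply, one_apply]

theorem reversalMatrix_submatrix_orientEquiv [Zero R] [One R] :
    (reversalMatrix N R).submatrix DirEdge.orientEquiv DirEdge.orientEquiv
      = blockDiagonal fun _ => !![0, 1; 1, 0] := by
  ext ⟨i, p⟩ ⟨j, q⟩
  fin_cases i <;> fin_cases j <;>
    simp [reversalMatrix, DirEdge.orientEquiv, DirEdge.reverse, blockDiagonal_apply,
      Subtype.ext_iff]
  all_goals
    intro h
    have hp := p.2
    have hq := q.2
    simp only [Prod.ext_iff, Prod.fst_swap, Prod.snd_swap] at h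
    order

theorem card_fin_pairs_lt : Fintype.card {p : Fin N × Fin N // p.1 < p.2} = N * (N - 1) / 2 := by
  have h := Fintype.card_congr (DirEdge.orientEquiv (N := N))
  rw [Fintype.card_prod, Fintype.card_fin, DirEdge.card_eq] at h
  omega

theorem det_smul_one_sub_reversalMatrix [CommRing R] (η : R) :
    det (η • 1 - reversalMatrix N R) = (η ^ 2 - 1) ^ (N * (N - 1) / 2) := by
  have hblock : (η • 1 - reversalMatrix N R).submatrix DirEdge.orientEquiv DirEdge.orientEquiv
      = blockDiagonal fun _ => η • 1 - !![0, 1; 1, 0] := by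
    calc (η • 1 - reversalMatrix N R).submatrix DirEdge.orientEquiv DirEdge.orientEquiv
        = η • (1 : Matrix _ _ R).submatrix DirEdge.orientEquiv DirEdge.orientEquiv
          - (reversalMatrix N R).submatrix DirEdge.orientEquiv DirEdge.orientEquiv := rfl
      _ = _ := by
        rw [submatrix_one_equiv, reversalMatrix_submatrix_orientEquiv, ← blockDiagonal_one,
          ← blockDiagonal_smul, ← blockDiagonal_sub]
        rfl
  rw [← det_submatrix_equiv_self DirEdge.orientEquiv, hblock, det_blockDiagonal,
    Finset.prod_const, Finset.card_univ, card_fin_pairs_lt]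
  simp [det_fin_two, sq]

end Reversal

section Incidence

variable {N : ℕ} (φ : Fin N → Fin N → ℝ)

def halfPhase (e : DirEdge N) : ℂ := Complex.exp (Complex.I / 2 * φ e.1.1 e.1.2)

def originMatrix : Matrix (Fin N) (DirEdge N) ℂ :=
  fun v e => if v = e.1.2 then halfPhase φ e else 0

def terminusMatrix : Matrix (Fin N) (DirEdge N) ℂ :=
  fun v e => if v = e.1.1 then halfPhase φ e else 0

variable {φ}

theorem halfPhase_reverse_mul (hφ : ∀ μ ν, φ ν μ = - φ μ ν) (e : DirEdge N) :
    halfPhase φ e.reverse * halfPhase φ e = 1 := by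
  rw [halfPhase, halfPhase, ← Complex.exp_add, DirEdge.reverse, Prod.fst_swap, Prod.snd_swap,
    hφ, Complex.ofReal_neg, mul_neg, neg_add_cancel, Complex.exp_zero]

theorem halfPhase_mul_self (e : DirEdge N) :
    halfPhase φ e * halfPhase φ e = Complex.exp (Complex.I * φ e.1.1 e.1.2) := by
  rw [halfPhase, ← Complex.exp_add]
  ring_nf

theorem originMatrix_transpose_mul_terminusMatrix_apply (e' e : DirEdge N) :
    ((originMatrix φ)ᵀ * terminusMatrix φ) e' e
      = if e'.1.2 = e.1.1 then halfPhase φ e' * halfPhase φ e else 0 := by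
  simp [mul_apply, originMatrix, terminusMatrix, eq_comm]

theorem hashimoto_eq (hφ : ∀ μ ν, φ ν μ = - φ μ ν) :
    hashimoto N φ = (originMatrix φ)ᵀ * terminusMatrix φ - reversalMatrix N ℂ := by
  ext e' e
  have hphase : Complex.exp (Complex.I / 2 * ((φ e.1.1 e.1.2 : ℂ) + φ e'.1.1 e'.1.2))
      = halfPhase φ e' * halfPhase φ e := by
    rw [halfPhase, halfPhase, ← Complex.exp_add]
    ring_nf
  rw [hashimoto, hphase, Matrix.sub_apply, originMatrix_transpose_mul_terminusMatrix_apply,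
    reversalMatrix]
  simp only [← DirEdge.eq_reverse_iff]
  by_cases hrev : e' = e.reverse
  · subst hrev
    have horigin : e.reverse.1.2 = e.1.1 := rfl
    rw [if_pos rfl, if_pos horigin, if_pos horigin, halfPhase_reverse_mul hφ]
    ring
  · rw [if_neg hrev]
    split_ifs <;> ring

theorem terminusMatrix_mul_originMatrix_transpose :
    terminusMatrix φ * (originMatrix φ)ᵀ = umeMatrix N φ := by
  ext u v
  rw [mul_apply, umeMatrix]
  split_ifs with huv
  · subst huv
    refine Finset.sum_eq_zero fun e _ => ?_
    simp only [terminusMatrix, originMatrix, transpose_apply]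
    split_ifs with h₁ h₂
    · exact absurd (h₁.symm.trans h₂) e.2
    all_goals simp
  · rw [Fintype.sum_eq_single ⟨(u, v), huv⟩]
    · simp [terminusMatrix, originMatrix, halfPhase_mul_self]
    · intro e he
      simp only [terminusMatrix, originMatrix, transpose_apply]
      split_ifs with h₁ h₂
      · exact absurd (Subtype.ext (Prod.ext h₁.symm h₂.symm)) he
      all_goals simp

theorem terminusMatrix_mul_reversalMatrix_mul_originMatrix_transpose
    (hφ : ∀ μ ν, φ ν μ = - φ μ ν) :
    terminusMatrix φ * reversalMatrix N ℂ * (originMatrix φ)ᵀ = ((N : ℂ) - 1) • 1 := by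
  have hterm : ∀ (u v : Fin N) (e : DirEdge N),
      (terminusMatrix φ * reversalMatrix N ℂ) u e * (originMatrix φ)ᵀ e v
        = if e.1.2 = u ∧ e.1.2 = v then 1 else 0 := by
    intro u v e
    simp only [mul_apply, reversalMatrix, mul_ite, mul_one, mul_zero, Finset.sum_ite_eq',
      Finset.mem_univ, if_true, terminusMatrix, transpose_apply, originMatrix,
      show e.reverse.1.1 = e.1.2 from rfl]
    by_cases hu : e.1.2 = u
    · subst hu
      by_cases hv : e.1.2 = v
      · subst hv
        simp [halfPhase_reverse_mul hφ]
      · simp [hv, Ne.symm hv]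
    · simp [hu, Ne.symm hu]
  ext u v
  rw [mul_apply]
  simp_rw [hterm]
  by_cases huv : u = v
  · subst huv
    simp [Finset.sum_boole, ← Fintype.card_subtype, DirEdge.card_origin_eq, Nat.cast_pred u.pos]
  · rw [Finset.sum_eq_zero fun e _ => if_neg fun h => huv (h.1.symm.trans h.2)]
    simp [huv]

end Incidence

theorem mul_sub_one_eq_two_mul_half_mul_sub_three_add {N : ℕ} (hN : 3 ≤ N) :
    N * (N - 1) = 2 * (N * (N - 3) / 2 + N) := by
  obtain ⟨n, rfl⟩ : ∃ n, N = n + 3 := ⟨N - 3, by omega⟩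
  obtain ⟨k, hk⟩ : Even ((n + 3) * n) := by
    rcases Nat.even_or_odd n with h | h
    · exact h.mul_left _
    · exact (h.add_odd (by decide : Odd 3)).mul_right _
  rw [show n + 3 - 1 = n + 2 from rfl, Nat.add_sub_cancel, hk, show (k + k) / 2 = k by omega]
  linarith

theorem bass_identity_of_sq_ne_one {N : ℕ} (hN : 3 ≤ N) {φ : Fin N → Fin N → ℝ}
    (hφ : ∀ μ ν, φ ν μ = - φ μ ν) {η : ℂ} (hη : η ^ 2 - 1 ≠ 0) :
    (η • (1 : Matrix (DirEdge N) (DirEdge N) ℂ) - hashimoto N φ).det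
      = (η ^ 2 - 1) ^ (N * (N - 3) / 2) *
        ((η ^ 2 + (N : ℂ) - 2) • (1 : Matrix (Fin N) (Fin N) ℂ) - η • umeMatrix N φ).det := by
  have key := det_smul_one_sub_mul_sub_involutive (reversalMatrix N ℂ) reversalMatrix_mul_self
    (originMatrix φ)ᵀ (terminusMatrix φ) η
  have hM : (η ^ 2 - 1) • 1 - η • umeMatrix N φ + ((N : ℂ) - 1) • 1
      = (η ^ 2 + (N : ℂ) - 2) • (1 : Matrix (Fin N) (Fin N) ℂ) - η • umeMatrix N φ := by
    module
  rw [← hashimoto_eq hφ, det_smul_one_sub_reversalMatrix, terminusMatrix_mul_originMatrix_transpose,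
    Matrix.mul_assoc, ← Matrix.mul_assoc (terminusMatrix φ),
    terminusMatrix_mul_reversalMatrix_mul_originMatrix_transpose hφ, hM, Fintype.card_fin,
    DirEdge.card_eq, mul_sub_one_eq_two_mul_half_mul_sub_three_add hN,
    Nat.mul_div_cancel_left _ two_pos] at key
  apply mul_right_cancel₀ (pow_ne_zero (N * (N - 3) / 2 + 2 * N) hη)
  linear_combination key

/-- Bass identity for complete magnetic graphs: for `N ≥ 3`, any antisymmetric
phases `Φ`, and every `η ∈ ℂ`,
`det(η I − Y(Φ)) = (η² − 1)^{N(N−3)/2} · det((η² + N − 2) I − η M)`. -/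
theorem bass_identity (N : ℕ) (hN : 3 ≤ N) (φ : Fin N → Fin N → ℝ)
    (hφ : ∀ μ ν, φ ν μ = - φ μ ν) (η : ℂ) :
    (η • (1 : Matrix (DirEdge N) (DirEdge N) ℂ) - hashimoto N φ).det
      = (η ^ 2 - 1) ^ (N * (N - 3) / 2) *
        ((η ^ 2 + (N : ℂ) - 2) • (1 : Matrix (Fin N) (Fin N) ℂ) - η • umeMatrix N φ).det := by
  have hdense : Dense ({1, -1} : Set ℂ)ᶜ := (Set.toFinite _).countable.dense_compl ℂ
  revert η
  refine funext_iff.1 (Continuous.ext_on hdense ?_ ?_ ?_)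
  · fun_prop
  · fun_prop
  · intro z hz
    exact bass_identity_of_sq_ne_one hN hφ (by simpa [sub_eq_zero, not_or] using hz)
end
end

section
/- Let N ≥ 2 and let Y(Φ) be the magnetic Hashimoto matrix with phases Φ independent and uniform on [0,2π). Then ⟨Tr[Y(Φ)^m]⟩ = 0 for every odd positive integer m, and also ⟨Tr[Y(Φ)^{2n}]⟩ = 0 for n = 1, 2, 3, 4 (i.e. for even powers m = 2, 4, 6, 8). -/
open MeasureTheory Matrix

noncomputable section

/-!
Expanding the trace, `⟨Tr Y^m⟩` is a sum over closed walks of `m` directed edges. A walk contributes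
nothing unless it is non-backtracking, and then contributes `⟨exp (i ∑ₖ φ_{eₖ})⟩`, which vanishes
unless every edge is traversed equally often in both directions. Such a balanced closed walk has
even length, since the traversals of `(a, b)` and `(b, a)` pair up, and length at least `10`.
Indeed each of its `s` vertices is left towards both of its neighbours along the walk, so there are
at least `2 s` distinct steps, and at most `min m (s (s - 1))`; for `m ≤ 8` every vertex thus has
exactly two out-neighbours. Then each step determines the next, so the walk read backwards from the
reversal of its first step retraces it, and the centre of this palindrome is a loop or a backtrack.
-/

open Finset Complex

theorem Matrix.pow_succ_apply_eq_sum_prod {R ι : Type*} [CommSemiring R] [Fintype ι]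
    [DecidableEq ι] (M : Matrix ι ι R) (n : ℕ) (i j : ι) :
    (M ^ (n + 1)) i j = ∑ v : Fin n → ι,
      ∏ k, M ((Fin.cons i v : Fin (n + 1) → ι) k) ((Fin.snoc v j : Fin (n + 1) → ι) k) := by
  induction n generalizing i with
  | zero => simp [Fin.snoc]
  | succ n ih =>
    rw [pow_succ', mul_apply, ← (Fin.consEquiv fun _ => ι).sum_comp, Fintype.sum_prod_type]
    simp only [ih, mul_sum]
    refine Fintype.sum_congr _ _ fun l => Fintype.sum_congr _ _ fun v => ?_
    change _ = ∏ k, M ((Fin.cons i (Fin.cons l v : Fin (n + 1) → ι) : Fin (n + 2) → ι) k)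
      ((Fin.snoc (Fin.cons l v : Fin (n + 1) → ι) j : Fin (n + 2) → ι) k)
    rw [← Fin.cons_snoc_eq_snoc_cons]
    conv_rhs => rw [Fin.prod_univ_succ]
    simp

theorem Matrix.trace_pow_eq_sum_prod {R ι : Type*} [CommSemiring R] [Fintype ι] [DecidableEq ι]
    (M : Matrix ι ι R) (m : ℕ) [NeZero m] :
    trace (M ^ m) = ∑ w : Fin m → ι, ∏ k, M (w k) (w (k + 1)) := by
  obtain ⟨n, rfl⟩ := Nat.exists_eq_succ_of_ne_zero (NeZero.ne m)
  simp only [trace, diag, pow_succ_apply_eq_sum_prod, Fin.snoc_eq_cons_rotate, finRotate_apply]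
  rw [← (Fin.consEquiv fun _ => ι).sum_comp, Fintype.sum_prod_type]
  rfl

namespace ClosedWalk

variable {V : Type*} [DecidableEq V] {m : ℕ} [NeZero m]

def step (g : Fin m → V) (k : Fin m) : V × V := (g k, g (k + 1))

def steps (g : Fin m → V) : Finset (V × V) := univ.image (step g)

def stepCount (g : Fin m → V) (p : V × V) : ℕ := #{k | step g k = p}

structure IsBalancedNonbacktracking (g : Fin m → V) : Prop where
  succ_ne : ∀ k, g (k + 1) ≠ g k
  succ_succ_ne : ∀ k, g (k + 1 + 1) ≠ g k
  stepCount_swap : ∀ p, stepCount g p.swap = stepCount g p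

variable {g : Fin m → V}

theorem fst_mem_image_of_mem_steps {p : V × V} (hp : p ∈ steps g) : p.1 ∈ univ.image g := by
  obtain ⟨k, -, rfl⟩ := mem_image.1 hp
  exact mem_image_of_mem g (mem_univ k)

theorem snd_mem_image_of_mem_steps {p : V × V} (hp : p ∈ steps g) : p.2 ∈ univ.image g := by
  obtain ⟨k, -, rfl⟩ := mem_image.1 hp
  exact mem_image_of_mem g (mem_univ (k + 1))

theorem card_steps_le (g : Fin m → V) : #(steps g) ≤ m :=
  card_image_le.trans (card_univ.trans (Fintype.card_fin m)).le

namespace IsBalancedNonbacktracking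

theorem exists_step_eq_swap (hg : IsBalancedNonbacktracking g) (k : Fin m) :
    ∃ j, step g j = (step g k).swap := by
  have hk : 0 < stepCount g (step g k) := card_pos.2 ⟨k, by simp⟩
  rw [← hg.stepCount_swap] at hk
  obtain ⟨j, hj⟩ := card_pos.1 hk
  exact ⟨j, (mem_filter.1 hj).2⟩

theorem swap_mem_steps (hg : IsBalancedNonbacktracking g) {p : V × V} (hp : p ∈ steps g) :
    p.swap ∈ steps g := by
  obtain ⟨k, -, rfl⟩ := mem_image.1 hp
  obtain ⟨j, hj⟩ := hg.exists_step_eq_swap k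
  exact mem_image.2 ⟨j, mem_univ _, hj⟩

theorem even [Fintype V] (hg : IsBalancedNonbacktracking g) : Even m := by
  have hsum : ∑ p : V × V, (stepCount g p : ZMod 2) = 0 := by
    refine sum_ninvolution Prod.swap (fun p => ?_) (fun p hp => ?_) (fun _ => mem_univ _)
      Prod.swap_swap
    · rw [hg.stepCount_swap, CharTwo.add_self_eq_zero]
    · have hpos : 0 < stepCount g p := Nat.pos_of_ne_zero fun h => hp (by rw [h, Nat.cast_zero])
      obtain ⟨k, hk⟩ := card_pos.1 hpos
      rw [← (mem_filter.1 hk).2]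
      exact fun h => hg.succ_ne k (congrArg Prod.fst h)
  rw [← ZMod.natCast_eq_zero_iff_even, ← hsum]
  simpa [stepCount] using congrArg (Nat.cast : ℕ → ZMod 2)
    (card_eq_sum_card_fiberwise (f := step g) (s := univ) (t := univ) fun _ _ => mem_univ _)

theorem steps_subset_offDiag (hg : IsBalancedNonbacktracking g) :
    steps g ⊆ (univ.image g).offDiag := by
  intro p hp
  refine mem_offDiag.2 ⟨fst_mem_image_of_mem_steps hp, snd_mem_image_of_mem_steps hp, ?_⟩
  obtain ⟨k, -, rfl⟩ := mem_image.1 hp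
  exact (hg.succ_ne k).symm

theorem two_le_card_steps_filter_fst (hg : IsBalancedNonbacktracking g) (k : Fin m) :
    2 ≤ #{p ∈ steps g | p.1 = g k} := by
  have hprev : (g k, g (k - 1)) ∈ steps g := by
    simpa [step] using hg.swap_mem_steps (mem_image_of_mem (step g) (mem_univ (k - 1)))
  have hne : g (k + 1) ≠ g (k - 1) := by
    simpa using hg.succ_succ_ne (k - 1)
  refine one_lt_card.2 ⟨_, mem_filter.2 ⟨mem_image_of_mem (step g) (mem_univ k), rfl⟩,
    _, mem_filter.2 ⟨hprev, rfl⟩, ?_⟩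
  simpa [step] using hne

theorem card_steps_filter_fst_eq_two (hg : IsBalancedNonbacktracking g) (hm : m ≤ 8) :
    ∀ a ∈ univ.image g, #{p ∈ steps g | p.1 = a} = 2 := by
  set s := #(univ.image g)
  have hsum : ∑ a ∈ univ.image g, #{p ∈ steps g | p.1 = a} = #(steps g) :=
    (card_eq_sum_card_fiberwise fun _ => fst_mem_image_of_mem_steps).symm
  have hlow : ∀ a ∈ univ.image g, 2 ≤ #{p ∈ steps g | p.1 = a} := by
    intro a ha
    obtain ⟨k, -, rfl⟩ := mem_image.1 ha
    exact hg.two_le_card_steps_filter_fst k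
  have hlow_sum : 2 * s ≤ #(steps g) := by
    rw [← hsum, mul_comm, ← smul_eq_mul, ← sum_const]
    exact sum_le_sum hlow
  have hoff : #(steps g) ≤ s * s - s :=
    (card_le_card hg.steps_subset_offDiag).trans_eq (offDiag_card _)
  have hs : 0 < s := card_pos.2 (univ_nonempty.image g)
  have hup : #(steps g) ≤ 2 * s := by
    have := card_steps_le g
    have : s ≤ 4 := by omega
    interval_cases s <;> omega
  have hsum_two : ∑ a ∈ univ.image g, #{p ∈ steps g | p.1 = a} = ∑ a ∈ univ.image g, 2 := by
    rw [sum_const, smul_eq_mul, hsum]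
    omega
  exact fun a ha => ((sum_eq_sum_iff_of_le hlow).1 hsum_two.symm a ha).symm

/-- The out-neighbours of `g (k + 1)` are `g (k + 2)` and `g k`; a step `j` arriving there from
`g (k + 2)` must therefore leave towards `g k`. -/
theorem step_succ_eq_swap (hg : IsBalancedNonbacktracking g)
    (hdeg : ∀ a ∈ univ.image g, #{p ∈ steps g | p.1 = a} = 2) {j k : Fin m}
    (h : step g j = (step g (k + 1)).swap) : step g (j + 1) = (step g k).swap := by
  simp only [step, Prod.swap_prod_mk, Prod.mk.injEq] at h
  have hmem : ∀ p ∈ steps g, p.1 = g (k + 1) → p ∈ {p ∈ steps g | p.1 = g (k + 1)} :=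
    fun p hp h1 => mem_filter.2 ⟨hp, h1⟩
  have hstep : ∀ i, step g i ∈ steps g := fun i => mem_image_of_mem _ (mem_univ i)
  by_contra hne
  have hsub : {step g (k + 1), step g (j + 1), (step g k).swap} ⊆
      {p ∈ steps g | p.1 = g (k + 1)} := by
    simp only [insert_subset_iff, singleton_subset_iff]
    exact ⟨hmem _ (hstep _) rfl, hmem _ (hstep _) h.2, hmem _ (hg.swap_mem_steps (hstep k)) rfl⟩
  have hcard : #{step g (k + 1), step g (j + 1), (step g k).swap} = 3 := by
    refine card_eq_three.2 ⟨_, _, _, ?_, ?_, hne, rfl⟩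
    · simp only [step, ne_eq, Prod.mk.injEq, not_and]
      exact fun _ h' => hg.succ_succ_ne j (h'.symm.trans h.1.symm)
    · simp only [step, Prod.swap_prod_mk, ne_eq, Prod.mk.injEq, not_and]
      exact fun _ => hg.succ_succ_ne k
  have := card_le_card hsub
  rw [hcard, hdeg _ (mem_image_of_mem g (mem_univ _))] at this
  omega

open Fin.NatCast Fin.CommRing in
theorem step_add_eq_swap_step_neg (hg : IsBalancedNonbacktracking g)
    (hdeg : ∀ a ∈ univ.image g, #{p ∈ steps g | p.1 = a} = 2) {d : Fin m}
    (hd : step g d = (step g 0).swap) (i : ℕ) : step g (d + i) = (step g (-i)).swap := by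
  induction i with
  | zero => simpa using hd
  | succ i ih =>
    have h := hg.step_succ_eq_swap hdeg (j := d + i) (k := -i - 1) (by rwa [sub_add_cancel])
    rwa [Nat.cast_succ, ← add_assoc, neg_add']

open Fin.NatCast Fin.CommRing in
theorem eight_lt (hg : IsBalancedNonbacktracking g) : 8 < m := by
  by_contra! hm
  obtain ⟨d, hd⟩ := hg.exists_step_eq_swap 0
  have hpal := hg.step_add_eq_swap_step_neg (hg.card_steps_filter_fst_eq_two hm) hd
  -- the centre `d + t` of the palindrome `hpal` satisfies `d + t = -t` or `d + t + 1 = -t`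
  have hval := Fin.cast_val_eq_self (-d)
  rcases Nat.even_or_odd' (-d).val with ⟨t, ht | ht⟩ <;> rw [ht] at hval <;> push_cast at hval
  · have h := hpal t
    rw [show -(t : Fin m) = d + t by linear_combination -hval] at h
    exact hg.succ_ne (d + t) (congrArg Prod.fst h).symm
  · have h := hpal t
    rw [show -(t : Fin m) = d + t + 1 by linear_combination -hval] at h
    exact hg.succ_succ_ne (d + t) (congrArg Prod.fst h).symm

end IsBalancedNonbacktracking

end ClosedWalk

instance : IsProbabilityMeasure uniformPhase := by
  constructor
  rw [uniformPhase]
  simp only [Measure.smul_apply, Measure.restrict_apply MeasurableSet.univ, Set.univ_inter,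
    Real.volume_Ico, smul_eq_mul, sub_zero]
  rw [ENNReal.inv_mul_cancel] <;> simp [Real.pi_pos, ENNReal.mul_eq_top]

instance {N : ℕ} : IsProbabilityMeasure (phaseMeasure N) := by
  unfold phaseMeasure
  infer_instance

theorem integral_uniformPhase_exp_int_mul (c : ℤ) :
    ∫ x, exp (I * ((c * x : ℝ) : ℂ)) ∂uniformPhase = if c = 0 then 1 else 0 := by
  split_ifs with hc
  · simp [hc]
  have hcI : I * c ≠ 0 := mul_ne_zero I_ne_zero (Int.cast_ne_zero.2 hc)
  have hperiod : exp (I * c * (2 * Real.pi : ℝ)) = 1 := by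
    rw [← exp_int_mul_two_pi_mul_I c]
    push_cast
    ring_nf
  rw [uniformPhase, integral_smul_measure, Measure.restrict_congr_set Ico_ae_eq_Ioc,
    ← intervalIntegral.integral_of_le Real.two_pi_pos.le]
  simp_rw [ofReal_mul, ofReal_intCast, ← mul_assoc]
  rw [integral_exp_mul_complex hcI, hperiod]
  simp

theorem integral_phaseMeasure_exp_sum_eq_zero {N : ℕ} {c : Fin N → Fin N → ℤ} (hc : c ≠ 0) :
    ∫ ω, exp (I * ((∑ μ, ∑ ν, c μ ν * ω μ ν : ℝ) : ℂ)) ∂phaseMeasure N = 0 := by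
  simp_rw [ofReal_sum, mul_sum, exp_sum]
  rw [phaseMeasure, integral_fintype_prod_eq_prod
    (fun μ (row : Fin N → ℝ) => ∏ ν, exp (I * ((c μ ν * row ν : ℝ) : ℂ)))]
  have hrow (μ : Fin N) : ∫ row : Fin N → ℝ, ∏ ν, exp (I * ((c μ ν * row ν : ℝ) : ℂ))
      ∂Measure.pi (fun _ => uniformPhase) = ∏ ν, if c μ ν = 0 then 1 else 0 := by
    rw [integral_fintype_prod_eq_prod (fun ν (x : ℝ) => exp (I * ((c μ ν * x : ℝ) : ℂ)))]
    simp_rw [integral_uniformPhase_exp_int_mul]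
  simp_rw [hrow]
  obtain ⟨μ, hμ⟩ := Function.ne_iff.1 hc
  obtain ⟨ν, hν⟩ := Function.ne_iff.1 hμ
  exact prod_eq_zero (mem_univ μ) (prod_eq_zero (mem_univ ν) (if_neg hν))

theorem integrable_exp_I_mul_ofReal {α : Type*} [MeasurableSpace α] {μ : Measure α}
    [IsFiniteMeasure μ] {f : α → ℝ} (hf : Measurable f) :
    Integrable (fun x => exp (I * (f x : ℂ))) μ := by
  refine Integrable.of_bound (by fun_prop : Measurable _).aestronglyMeasurable 1
    (ae_of_all _ fun x => ?_)
  rw [mul_comm, norm_exp_ofReal_mul_I]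

section Hashimoto

variable {N : ℕ}

theorem hashimoto_apply_eq_ite (φ : Fin N → Fin N → ℝ) (e' e : DirEdge N) :
    hashimoto N φ e' e = if e'.1.2 = e.1.1 ∧ e'.1 ≠ (e.1.2, e.1.1) then
      exp (I / 2 * ((φ e.1.1 e.1.2 : ℂ) + (φ e'.1.1 e'.1.2 : ℂ))) else 0 := by
  by_cases hback : e'.1 = (e.1.2, e.1.1)
  · simp [hashimoto, hback]
  · by_cases hadj : e'.1.2 = e.1.1 <;> simp [hashimoto, hback, hadj]

theorem prod_hashimoto_closed_walk {m : ℕ} [NeZero m] (φ : Fin N → Fin N → ℝ)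
    (w : Fin m → DirEdge N) :
    ∏ k, hashimoto N φ (w k) (w (k + 1)) =
      if ∀ k, (w k).1.2 = (w (k + 1)).1.1 ∧ (w k).1 ≠ ((w (k + 1)).1.2, (w (k + 1)).1.1) then
        exp (I * ((∑ k, φ (w k).1.1 (w k).1.2 : ℝ) : ℂ)) else 0 := by
  simp_rw [hashimoto_apply_eq_ite, prod_ite_zero, mem_univ, true_implies, ← exp_sum]
  congr 2
  have hshift : ∑ k, (φ (w (k + 1)).1.1 (w (k + 1)).1.2 : ℂ) =
      ∑ k, (φ (w k).1.1 (w k).1.2 : ℂ) :=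
    Equiv.sum_comp (Equiv.addRight 1) fun k => (φ (w k).1.1 (w k).1.2 : ℂ)
  rw [← mul_sum, sum_add_distrib, hshift, ofReal_sum]
  ring

theorem phases_eq_sum (ω : Fin N → Fin N → ℝ) (a b : Fin N) :
    phases N ω a b = ∑ μ, ∑ ν, (if μ < ν then
      ((if (a, b) = (μ, ν) then 1 else 0) - (if (a, b) = (ν, μ) then 1 else 0)) else 0) *
        ω μ ν := by
  have hsplit (c : Prop) [Decidable c] (x y : ℝ) :
      (if c then x - y else 0) = (if c then x else 0) - (if c then y else 0) := by
    split_ifs <;> simp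
  simp only [ite_mul, zero_mul, sub_mul, one_mul, hsplit, sum_sub_distrib, Prod.mk.injEq, ← ite_and]
  simp only [and_comm, ite_and, phases, sum_ite_irrel, sum_ite_eq, mem_univ, ↓reduceIte,
    sum_const_zero]
  split_ifs with hab hba
  · exact absurd hba hab.not_gt
  all_goals ring

/-- The net number of traversals of the edge `{μ, ν}` from `μ` to `ν`, recorded for `μ < ν`
only: these are the pairs carrying an independent phase `ω μ ν`. -/
def netFlow {m : ℕ} (w : Fin m → DirEdge N) (μ ν : Fin N) : ℤ :=
  if μ < ν then #{k | (w k).1 = (μ, ν)} - #{k | (w k).1 = (ν, μ)} else 0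

theorem sum_phases_eq_sum_netFlow_mul {m : ℕ} (ω : Fin N → Fin N → ℝ) (w : Fin m → DirEdge N) :
    ∑ k, phases N ω (w k).1.1 (w k).1.2 = ∑ μ, ∑ ν, (netFlow w μ ν : ℝ) * ω μ ν := by
  simp_rw [phases_eq_sum, Prod.mk.eta]
  rw [sum_comm]
  refine sum_congr rfl fun μ _ => ?_
  rw [sum_comm]
  refine sum_congr rfl fun ν _ => ?_
  rw [← sum_mul, netFlow]
  split_ifs <;> simp [sum_sub_distrib]

variable {m : ℕ} [NeZero m]

theorem isBalancedNonbacktracking_of_netFlow_eq_zero {w : Fin m → DirEdge N}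
    (hnb : ∀ k, (w k).1.2 = (w (k + 1)).1.1 ∧ (w k).1 ≠ ((w (k + 1)).1.2, (w (k + 1)).1.1))
    (hflow : netFlow w = 0) : ClosedWalk.IsBalancedNonbacktracking fun k => (w k).1.1 := by
  set g : Fin m → Fin N := fun k => (w k).1.1
  have hstep (k : Fin m) : (w k).1 = ClosedWalk.step g k := Prod.ext rfl (hnb k).1
  have hcount (p : Fin N × Fin N) : ClosedWalk.stepCount g p = #{k | (w k).1 = p} := by
    simp [ClosedWalk.stepCount, hstep]
  have hbalanced (μ ν : Fin N) (h : μ < ν) :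
      #{k | (w k).1 = (μ, ν)} = #{k | (w k).1 = (ν, μ)} := by
    have := congrFun₂ hflow μ ν
    simp only [netFlow, if_pos h, Pi.zero_apply] at this
    omega
  refine ⟨fun k h => (w k).2 ((hnb k).1.trans h).symm,
    fun k h => (hnb k).2 (Prod.ext (h.symm.trans (hnb (k + 1)).1.symm) (hnb k).1), fun p => ?_⟩
  rw [hcount, hcount]
  rcases lt_trichotomy p.1 p.2 with h | h | h
  · exact (hbalanced _ _ h).symm
  · rw [show p.swap = p from Prod.ext h.symm h]
  · exact hbalanced _ _ h

theorem prod_hashimoto_phases_closed_walk (ω : Fin N → Fin N → ℝ) (w : Fin m → DirEdge N) :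
    ∏ k, hashimoto N (phases N ω) (w k) (w (k + 1)) =
      if ∀ k, (w k).1.2 = (w (k + 1)).1.1 ∧ (w k).1 ≠ ((w (k + 1)).1.2, (w (k + 1)).1.1) then
        exp (I * ((∑ μ, ∑ ν, (netFlow w μ ν : ℝ) * ω μ ν : ℝ) : ℂ)) else 0 := by
  rw [prod_hashimoto_closed_walk, sum_phases_eq_sum_netFlow_mul]

theorem integrable_prod_hashimoto_closed_walk (w : Fin m → DirEdge N) :
    Integrable (fun ω => ∏ k, hashimoto N (phases N ω) (w k) (w (k + 1))) (phaseMeasure N) := by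
  simp_rw [prod_hashimoto_phases_closed_walk]
  split_ifs
  · exact integrable_exp_I_mul_ofReal (by fun_prop)
  · exact integrable_zero _ _ _

theorem integral_prod_hashimoto_closed_walk_eq_zero
    (hm : ∀ g : Fin m → Fin N, ¬ ClosedWalk.IsBalancedNonbacktracking g) (w : Fin m → DirEdge N) :
    ∫ ω, ∏ k, hashimoto N (phases N ω) (w k) (w (k + 1)) ∂phaseMeasure N = 0 := by
  simp_rw [prod_hashimoto_phases_closed_walk]
  split_ifs with hnb
  · exact integral_phaseMeasure_exp_sum_eq_zero fun hflow =>
      hm _ (isBalancedNonbacktracking_of_netFlow_eq_zero hnb hflow)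
  · exact integral_zero _ _

theorem integral_trace_hashimoto_pow_eq_zero
    (hm : ∀ g : Fin m → Fin N, ¬ ClosedWalk.IsBalancedNonbacktracking g) :
    ∫ ω, trace (hashimoto N (phases N ω) ^ m) ∂phaseMeasure N = 0 := by
  simp_rw [trace_pow_eq_sum_prod]
  rw [integral_finsetSum _ fun w _ => integrable_prod_hashimoto_closed_walk w]
  exact sum_eq_zero fun w _ => integral_prod_hashimoto_closed_walk_eq_zero hm w

end Hashimoto

theorem hashimoto_trace_low_moments_zero_general (N : ℕ) :
    (∀ m : ℕ, 0 < m → Odd m →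
      (∫ ω, Matrix.trace ((hashimoto N (phases N ω)) ^ m) ∂(phaseMeasure N)) = 0) ∧
    (∀ n : ℕ, 1 ≤ n → n ≤ 4 →
      (∫ ω, Matrix.trace ((hashimoto N (phases N ω)) ^ (2 * n)) ∂(phaseMeasure N)) = 0) := by
  refine ⟨fun m hm hodd => ?_, fun n hn hn4 => ?_⟩
  · have : NeZero m := ⟨hm.ne'⟩
    exact integral_trace_hashimoto_pow_eq_zero fun g hg => Nat.not_even_iff_odd.2 hodd hg.even
  · have : NeZero (2 * n) := ⟨by omega⟩
    exact integral_trace_hashimoto_pow_eq_zero fun g hg => by have := hg.eight_lt; omega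

/-- for `N ≥ 2` and i.i.d. uniform phases, `⟨Tr[Y(Φ)^m]⟩ = 0` for every odd
positive `m`, and `⟨Tr[Y(Φ)^{2n}]⟩ = 0` for `n = 1, 2, 3, 4`. -/
theorem hashimoto_trace_low_moments_zero (N : ℕ) (hN : 2 ≤ N) :
    (∀ m : ℕ, 0 < m → Odd m →
      (∫ ω, Matrix.trace ((hashimoto N (phases N ω)) ^ m) ∂(phaseMeasure N)) = 0) ∧
    (∀ n : ℕ, 1 ≤ n → n ≤ 4 →
      (∫ ω, Matrix.trace ((hashimoto N (phases N ω)) ^ (2 * n)) ∂(phaseMeasure N)) = 0) :=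
  hashimoto_trace_low_moments_zero_general N
end
end

section
/- Let N ≥ 2 and let n, m be positive integers with n − m odd. Then the covariance of the traces of powers of the magnetic Hashimoto matrix vanishes exactly: Cov(Tr[Y(Φ)^n], Tr[Y(Φ)^m]) = ⟨Tr[Y(Φ)^n] Tr[Y(Φ)^m]⟩ − ⟨Tr[Y(Φ)^n]⟩⟨Tr[Y(Φ)^m]⟩ = 0. -/
open MeasureTheory Matrix

noncomputable section

namespace HAux

/-- Shift by π modulo 2π on `[0, 2π)`, identity elsewhere. -/
def shift (x : ℝ) : ℝ :=
  if x ∈ Set.Ico (0:ℝ) Real.pi then x + Real.pi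
  else if x ∈ Set.Ico Real.pi (2*Real.pi) then x - Real.pi else x

lemma measurable_shift : Measurable shift :=
  Measurable.ite measurableSet_Ico (measurable_id.add_const _)
    (Measurable.ite measurableSet_Ico (measurable_id.sub_const _) measurable_id)

lemma shift_invol : Function.Involutive shift := by
  intro x
  have hπ := Real.pi_pos
  unfold shift
  by_cases h1 : x ∈ Set.Ico (0:ℝ) Real.pi
  · have h2 : x + Real.pi ∉ Set.Ico (0:ℝ) Real.pi := fun h => absurd h.2 (by simp; linarith [h1.1])
    have h3 : x + Real.pi ∈ Set.Ico Real.pi (2*Real.pi) := ⟨by linarith [h1.1], by linarith [h1.2]⟩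
    rw [if_pos h1, if_neg h2, if_pos h3]; ring
  · by_cases h2 : x ∈ Set.Ico Real.pi (2*Real.pi)
    · have h3 : x - Real.pi ∈ Set.Ico (0:ℝ) Real.pi := ⟨by linarith [h2.1], by linarith [h2.2]⟩
      rw [if_neg h1, if_pos h2, if_pos h3]; ring
    · rw [if_neg h1, if_neg h2, if_neg h1, if_neg h2]

lemma map_shift_restrict :
    Measure.map shift (volume.restrict (Set.Ico 0 (2*Real.pi)))
      = volume.restrict (Set.Ico 0 (2*Real.pi)) := by
  have hπ := Real.pi_pos
  have hsplit : Set.Ico (0:ℝ) (2*Real.pi) = Set.Ico 0 Real.pi ∪ Set.Ico Real.pi (2*Real.pi) :=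
    (Set.Ico_union_Ico_eq_Ico (by linarith) (by linarith)).symm
  rw [hsplit, Measure.restrict_union (Set.Ico_disjoint_Ico_same) measurableSet_Ico,
    Measure.map_add _ _ measurable_shift]
  have h1 : Measure.map shift (volume.restrict (Set.Ico 0 Real.pi))
      = volume.restrict (Set.Ico Real.pi (2*Real.pi)) := by
    have hae : shift =ᵐ[volume.restrict (Set.Ico 0 Real.pi)] (fun x => x + Real.pi) := by
      filter_upwards [ae_restrict_mem measurableSet_Ico] with x hx
      simp [shift, hx]
    rw [Measure.map_congr hae]
    have hpre : Set.Ico (0:ℝ) Real.pi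
        = (fun x => x + Real.pi) ⁻¹' Set.Ico Real.pi (2*Real.pi) := by
      ext x
      simp only [Set.mem_Ico, Set.mem_preimage]
      constructor <;> intro h <;> exact ⟨by linarith [h.1], by linarith [h.2]⟩
    rw [hpre, ← Measure.restrict_map (measurable_add_const _) measurableSet_Ico,
      map_add_right_eq_self volume Real.pi]
  have h2 : Measure.map shift (volume.restrict (Set.Ico Real.pi (2*Real.pi)))
      = volume.restrict (Set.Ico 0 Real.pi) := by
    have hae : shift =ᵐ[volume.restrict (Set.Ico Real.pi (2*Real.pi))]
        (fun x => x + (-Real.pi)) := by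
      filter_upwards [ae_restrict_mem measurableSet_Ico] with x hx
      have hx1 : x ∉ Set.Ico (0:ℝ) Real.pi := fun h => absurd h.2 (by simp; exact hx.1)
      simp only [shift, if_neg hx1, if_pos hx]; ring
    rw [Measure.map_congr hae]
    have hpre : Set.Ico Real.pi (2*Real.pi)
        = (fun x => x + (-Real.pi)) ⁻¹' Set.Ico (0:ℝ) Real.pi := by
      ext x
      simp only [Set.mem_Ico, Set.mem_preimage]
      constructor <;> intro h <;> exact ⟨by linarith [h.1], by linarith [h.2]⟩
    rw [hpre, ← Measure.restrict_map (measurable_add_const _) measurableSet_Ico,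
      map_add_right_eq_self volume (-Real.pi)]
  rw [h1, h2, add_comm]

lemma map_shift_uniform : Measure.map shift uniformPhase = uniformPhase := by
  unfold uniformPhase
  rw [Measure.map_smul, map_shift_restrict]

instance : IsProbabilityMeasure uniformPhase := by
  constructor
  rw [uniformPhase, Measure.smul_apply, smul_eq_mul, Measure.restrict_apply_univ,
    Real.volume_Ico, sub_zero]
  exact ENNReal.inv_mul_cancel (by positivity) ENNReal.ofReal_ne_top

lemma map_pi_comp {ι : Type*} [Fintype ι] {α : Type*} [MeasurableSpace α] (μ : Measure α)
    [SigmaFinite μ] {f : α → α} (hf : Measurable f) (h : Measure.map f μ = μ) :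
    Measure.map (fun v (i : ι) => f (v i)) (Measure.pi fun _ => μ)
      = Measure.pi fun _ => μ := by
  refine (Measure.pi_eq fun s hs => ?_).symm
  have hmeas : Measurable (fun (v : ι → α) (i : ι) => f (v i)) :=
    measurable_pi_lambda _ fun i => hf.comp (measurable_pi_apply i)
  rw [Measure.map_apply hmeas (MeasurableSet.univ_pi hs)]
  have hpre : ((fun v (i : ι) => f (v i)) : (ι → α) → ι → α) ⁻¹' Set.pi Set.univ s
      = Set.pi Set.univ (fun i => f ⁻¹' s i) := by
    ext v; simp [Set.mem_univ_pi]
  rw [hpre, Measure.pi_pi]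
  exact Finset.prod_congr rfl fun i _ => by rw [← Measure.map_apply hf (hs i), h]

/-- The global phase-shift map on samples. -/
def S (N : ℕ) (ω : Fin N → Fin N → ℝ) : Fin N → Fin N → ℝ :=
  fun μ ν => shift (ω μ ν)

lemma measurable_S (N : ℕ) : Measurable (S N) :=
  measurable_pi_lambda _ fun μ => measurable_pi_lambda _ fun ν =>
    measurable_shift.comp ((measurable_pi_apply μ).comp measurable_id |>.eval)

lemma map_S (N : ℕ) : Measure.map (S N) (phaseMeasure N) = phaseMeasure N := by
  unfold phaseMeasure
  exact map_pi_comp _ (measurable_pi_lambda _ fun i => measurable_shift.comp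
    (measurable_pi_apply i)) (map_pi_comp _ measurable_shift map_shift_uniform)

def Sequiv (N : ℕ) : (Fin N → Fin N → ℝ) ≃ᵐ (Fin N → Fin N → ℝ) where
  toFun := S N
  invFun := S N
  left_inv := fun ω => funext fun μ => funext fun ν => shift_invol _
  right_inv := fun ω => funext fun μ => funext fun ν => shift_invol _
  measurable_toFun := measurable_S N
  measurable_invFun := measurable_S N

end HAux

namespace HAux

open Complex

/-- Sign of the π-shift of the phase of a directed edge. -/
def sgn (N : ℕ) (ω : Fin N → Fin N → ℝ) (e : DirEdge N) : ℝ :=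
  if e.1.1 < e.1.2 then (if ω e.1.1 e.1.2 < Real.pi then 1 else -1)
  else (if ω e.1.2 e.1.1 < Real.pi then -1 else 1)

lemma sgn_eq_or (N : ℕ) (ω : Fin N → Fin N → ℝ) (e : DirEdge N) :
    sgn N ω e = 1 ∨ sgn N ω e = -1 := by
  unfold sgn; split <;> split <;> simp

lemma phases_S (N : ℕ) (ω : Fin N → Fin N → ℝ)
    (hω : ∀ a b, ω a b ∈ Set.Ico (0:ℝ) (2*Real.pi)) (e : DirEdge N) :
    phases N (S N ω) e.1.1 e.1.2 = phases N ω e.1.1 e.1.2 + sgn N ω e * Real.pi := by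
  have hπ := Real.pi_pos
  obtain ⟨⟨a, b⟩, hab⟩ := e
  simp only [phases, sgn, S]
  rcases lt_or_gt_of_ne hab with h | h
  · rw [if_pos h, if_pos h, if_pos h]
    by_cases hx : ω a b < Real.pi
    · have : ω a b ∈ Set.Ico (0:ℝ) Real.pi := ⟨(hω a b).1, hx⟩
      rw [shift, if_pos this, if_pos hx]; ring
    · have h1 : ω a b ∉ Set.Ico (0:ℝ) Real.pi := fun hh => hx hh.2
      have h2 : ω a b ∈ Set.Ico Real.pi (2*Real.pi) := ⟨not_lt.mp hx, (hω a b).2⟩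
      rw [shift, if_neg h1, if_pos h2, if_neg hx]; ring
  · have hnab : ¬ a < b := not_lt.mpr h.le
    rw [if_neg hnab, if_pos h, if_neg hnab, if_pos h, if_neg hnab]
    by_cases hx : ω b a < Real.pi
    · have : ω b a ∈ Set.Ico (0:ℝ) Real.pi := ⟨(hω b a).1, hx⟩
      rw [shift, if_pos this, if_pos hx]; ring
    · have h1 : ω b a ∉ Set.Ico (0:ℝ) Real.pi := fun hh => hx hh.2
      have h2 : ω b a ∈ Set.Ico Real.pi (2*Real.pi) := ⟨not_lt.mp hx, (hω b a).2⟩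
      rw [shift, if_neg h1, if_pos h2, if_neg hx]; ring

/-- The diagonal phase factor. -/
def dfun (N : ℕ) (ω : Fin N → Fin N → ℝ) (e : DirEdge N) : ℂ :=
  Complex.exp (Complex.I / 2 * ((sgn N ω e : ℝ) * Real.pi : ℝ))

lemma dfun_sq (N : ℕ) (ω : Fin N → Fin N → ℝ) (e : DirEdge N) :
    dfun N ω e * dfun N ω e = -1 := by
  rw [dfun, ← Complex.exp_add]
  rcases sgn_eq_or N ω e with h | h <;> rw [h] <;> push_cast
  · rw [show Complex.I / 2 * (1 * (Real.pi:ℂ)) + Complex.I / 2 * (1 * (Real.pi:ℂ))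
        = (Real.pi:ℂ) * Complex.I from by ring, Complex.exp_pi_mul_I]
  · rw [show Complex.I / 2 * (-1 * (Real.pi:ℂ)) + Complex.I / 2 * (-1 * (Real.pi:ℂ))
        = -((Real.pi:ℂ) * Complex.I) from by ring, Complex.exp_neg, Complex.exp_pi_mul_I]
    norm_num

lemma exp_split (p q s t : ℂ) :
    Complex.exp (Complex.I/2 * ((p + s) + (q + t))) =
      Complex.exp (Complex.I/2 * t) * Complex.exp (Complex.I/2 * (p + q))
        * Complex.exp (Complex.I/2 * s) := by
  rw [← Complex.exp_add, ← Complex.exp_add]; ring_nf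

lemma hashimoto_S (N : ℕ) (ω : Fin N → Fin N → ℝ)
    (hω : ∀ a b, ω a b ∈ Set.Ico (0:ℝ) (2*Real.pi)) :
    hashimoto N (phases N (S N ω))
      = Matrix.diagonal (dfun N ω) * hashimoto N (phases N ω) * Matrix.diagonal (dfun N ω) := by
  ext e' e
  simp only [Matrix.mul_diagonal, Matrix.diagonal_mul, hashimoto, dfun]
  rw [phases_S N ω hω e, phases_S N ω hω e']
  push_cast
  rw [exp_split]
  ring

end HAux

namespace HAux

lemma conj_pow {ι : Type*} [Fintype ι] [DecidableEq ι] (D Y : Matrix ι ι ℂ)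
    (hD : D * D = -1) (k : ℕ) :
    (D * Y * D) ^ (k + 1) = ((-1 : ℂ) ^ k) • (D * Y ^ (k + 1) * D) := by
  induction k with
  | zero => simp
  | succ k ih =>
    rw [pow_succ, ih, smul_mul_assoc]
    have key : D * Y ^ (k + 1) * D * (D * Y * D) = -(D * Y ^ (k + 1 + 1) * D) := by
      calc D * Y ^ (k + 1) * D * (D * Y * D)
          = D * Y ^ (k + 1) * (D * D) * (Y * D) := by noncomm_ring
        _ = D * Y ^ (k + 1) * (-1) * (Y * D) := by rw [hD]
        _ = -(D * Y ^ (k + 1 + 1) * D) := by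
            rw [pow_succ Y (k + 1)]; noncomm_ring
    rw [key, smul_neg, ← neg_smul]
    congr 1
    ring

lemma trace_conj_pow {ι : Type*} [Fintype ι] [DecidableEq ι] (D Y : Matrix ι ι ℂ)
    (hD : D * D = -1) (k : ℕ) (hk : 0 < k) :
    Matrix.trace ((D * Y * D) ^ k) = (-1 : ℂ) ^ k * Matrix.trace (Y ^ k) := by
  obtain ⟨j, rfl⟩ : ∃ j, k = j + 1 := ⟨k - 1, by omega⟩
  rw [conj_pow D Y hD j, Matrix.trace_smul, Matrix.trace_mul_cycle, hD, neg_one_mul,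
    Matrix.trace_neg, smul_eq_mul]
  ring

end HAux

namespace HAux

lemma ae_mem_Ico (N : ℕ) :
    ∀ᵐ ω ∂phaseMeasure N, ∀ a b, ω a b ∈ Set.Ico (0:ℝ) (2*Real.pi) := by
  have hprob : IsProbabilityMeasure (phaseMeasure N) := by
    unfold phaseMeasure; infer_instance
  set G : Set (Fin N → Fin N → ℝ) :=
    Set.pi Set.univ fun _ => Set.pi Set.univ fun _ => Set.Ico (0:ℝ) (2*Real.pi) with hG
  have hmeas : MeasurableSet G :=
    MeasurableSet.univ_pi fun _ => MeasurableSet.univ_pi fun _ => measurableSet_Ico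
  have huni : uniformPhase (Set.Ico 0 (2*Real.pi)) = 1 := by
    rw [uniformPhase, Measure.smul_apply, smul_eq_mul,
      Measure.restrict_apply measurableSet_Ico, Set.inter_self, Real.volume_Ico, sub_zero]
    exact ENNReal.inv_mul_cancel (by positivity) ENNReal.ofReal_ne_top
  have h1 : phaseMeasure N G = 1 := by
    rw [hG, phaseMeasure, Measure.pi_pi]
    simp [Measure.pi_pi, huni]
  have h0 : phaseMeasure N Gᶜ = 0 := by
    rw [measure_compl hmeas (measure_ne_top _ _), h1, measure_univ, tsub_self]
  filter_upwards [mem_ae_iff.mpr h0] with ω hω a b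
  exact hω a (Set.mem_univ a) b (Set.mem_univ b)

end HAux


open HAux in
/-- for `N ≥ 2` and positive integers `n, m` with `n − m` odd, the covariance
`⟨Tr[Y(Φ)^n]·Tr[Y(Φ)^m]⟩ − ⟨Tr[Y(Φ)^n]⟩·⟨Tr[Y(Φ)^m]⟩` vanishes exactly. -/
theorem hashimoto_trace_covariance_odd_zero (N : ℕ) (hN : 2 ≤ N) (n m : ℕ)
    (hn : 0 < n) (hm : 0 < m) (hodd : Odd ((n : ℤ) - (m : ℤ))) :
    (∫ ω, Matrix.trace ((hashimoto N (phases N ω)) ^ n)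
        * Matrix.trace ((hashimoto N (phases N ω)) ^ m) ∂(phaseMeasure N))
      - (∫ ω, Matrix.trace ((hashimoto N (phases N ω)) ^ n) ∂(phaseMeasure N))
        * (∫ ω, Matrix.trace ((hashimoto N (phases N ω)) ^ m) ∂(phaseMeasure N)) = 0 := by
  classical
  have hembed : MeasurableEmbedding (S N) := (Sequiv N).measurableEmbedding
  have hint : ∀ g : (Fin N → Fin N → ℝ) → ℂ,
      ∫ ω, g (S N ω) ∂(phaseMeasure N) = ∫ ω, g ω ∂(phaseMeasure N) := by
    intro g
    conv_rhs => rw [← map_S N]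
    exact (hembed.integral_map g).symm
  -- pointwise transformation of traces
  have hpt : ∀ (k : ℕ), 0 < k → ∀ ω, (∀ a b, ω a b ∈ Set.Ico (0:ℝ) (2*Real.pi)) →
      Matrix.trace ((hashimoto N (phases N (S N ω))) ^ k)
        = (-1 : ℂ) ^ k * Matrix.trace ((hashimoto N (phases N ω)) ^ k) := by
    intro k hk ω hω
    have hD : Matrix.diagonal (dfun N ω) * Matrix.diagonal (dfun N ω)
        = (-1 : Matrix (DirEdge N) (DirEdge N) ℂ) := by
      rw [Matrix.diagonal_mul_diagonal]
      have : (fun e => dfun N ω e * dfun N ω e) = fun _ => (-1 : ℂ) := funext (dfun_sq N ω)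
      rw [this]
      ext i j
      by_cases h : i = j <;> simp [Matrix.diagonal_apply, h, Matrix.one_apply]
    rw [hashimoto_S N ω hω, trace_conj_pow _ _ hD k hk]
  -- single-trace integrals
  have hA : ∀ (k : ℕ), 0 < k →
      (∫ ω, Matrix.trace ((hashimoto N (phases N ω)) ^ k) ∂(phaseMeasure N))
        = (-1 : ℂ) ^ k * ∫ ω, Matrix.trace ((hashimoto N (phases N ω)) ^ k) ∂(phaseMeasure N) := by
    intro k hk
    conv_lhs => rw [← hint fun ω => Matrix.trace ((hashimoto N (phases N ω)) ^ k)]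
    rw [integral_congr_ae (g := fun ω => (-1:ℂ)^k * Matrix.trace ((hashimoto N (phases N ω)) ^ k))
        (by filter_upwards [ae_mem_Ico N] with ω hω using hpt k hk ω hω),
      MeasureTheory.integral_const_mul]
  -- product integral
  have hB : (∫ ω, Matrix.trace ((hashimoto N (phases N ω)) ^ n)
        * Matrix.trace ((hashimoto N (phases N ω)) ^ m) ∂(phaseMeasure N))
      = (-1 : ℂ) ^ (n + m) * ∫ ω, Matrix.trace ((hashimoto N (phases N ω)) ^ n)
        * Matrix.trace ((hashimoto N (phases N ω)) ^ m) ∂(phaseMeasure N) := by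
    conv_lhs => rw [← hint fun ω => Matrix.trace ((hashimoto N (phases N ω)) ^ n)
        * Matrix.trace ((hashimoto N (phases N ω)) ^ m)]
    rw [integral_congr_ae (g := fun ω => (-1:ℂ)^(n+m) * (Matrix.trace ((hashimoto N (phases N ω)) ^ n)
          * Matrix.trace ((hashimoto N (phases N ω)) ^ m)))
        (by filter_upwards [ae_mem_Ico N] with ω hω
            rw [hpt n hn ω hω, hpt m hm ω hω, pow_add]; ring),
      MeasureTheory.integral_const_mul]
  -- parity facts
  have hnm : Odd (n + m) := by
    rcases hodd with ⟨k, hk⟩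
    rcases Nat.even_or_odd (n + m) with h | h
    · exfalso
      rcases h with ⟨j, hj⟩
      omega
    · exact h
  have hneg : ((-1 : ℂ)) ^ (n + m) = -1 := hnm.neg_one_pow
  have hJ : (∫ ω, Matrix.trace ((hashimoto N (phases N ω)) ^ n)
        * Matrix.trace ((hashimoto N (phases N ω)) ^ m) ∂(phaseMeasure N)) = 0 := by
    have h := hB
    rw [hneg, neg_one_mul] at h
    linear_combination h / 2
  have hzero : ∀ (k : ℕ), 0 < k → Odd k →
      (∫ ω, Matrix.trace ((hashimoto N (phases N ω)) ^ k) ∂(phaseMeasure N)) = 0 := by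
    intro k hk hko
    have h := hA k hk
    rw [hko.neg_one_pow, neg_one_mul] at h
    linear_combination h / 2
  rw [hJ]
  rcases Nat.even_or_odd n with hne | hno
  · have hmo : Odd m := by
      rcases hne with ⟨a, ha⟩
      rcases Nat.even_or_odd m with ⟨b, hb⟩ | h
      · exfalso; rcases hnm with ⟨c, hc⟩; omega
      · exact h
    rw [hzero m hm hmo, mul_zero, sub_zero]
  · rw [hzero n hn hno, zero_mul, sub_zero]
end
end
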